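/- arXiv:2503.22082 — 2 statements merged into one kernel-verified Lean document; each statement's English description precedes it below -/
import Mathlib

section
/- (Proposition 2, measure form) Let f be a ReLU network as defined and let the input x be a Gaussian-mixture random vector with law μ = Σ_{k=1}^K α_k N(μ_k, Σ_k). Then the law of the output y = f(x) decomposes as a mixture of truncated Gaussians pushed through affine maps: law(f(x)) = Σ_{ζ' ∈ {0,1}^N} Σ_{k=1}^K α_k · (g_{ζ'})_* ( N(μ_k, Σ_k) restricted to K(ζ') ), where g_{ζ'}(x) = C_L x + d_L is the affine map determined by ζ'. In particular, for a Gaussian-mixture input and piecewise affine f, the output is distributed as a mixture of truncated Gaussians. -/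
/-!
The activation pattern `x ↦ ζ'(x)` partitions the input space into its fibres, and these fibres
are exactly the polytopes `K(ζ')`: on the fibre of `ζ'` every relu acts as multiplication by
`diag(z_ℓ)`, so the network coincides there with the affine map `g_{ζ'}`, and the sign
conditions defining `K(ζ')` are then the conditions that `ζ'` is the pattern induced at `x`.
Hence the pushforward of any input law splits as the sum over `ζ'` of the pushforwards under
`g_{ζ'}` of its restrictions to `K(ζ')`; pushforward is additive in the measure, so the
decomposition passes through the Gaussian mixture.
-/

open Matrix MeasureTheory ProbabilityTheory

namespace ReluPaper

variable {n : ℕ → ℕ}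

/-- Hidden representations of the ReLU network: `hid W b x ℓ` is the paper's
`h_{ℓ+1}(x)`, so that for a network with `L = M + 1` layers the output is
`f(x) = h_L(x) = hid W b x M`. -/
noncomputable def hid (W : ∀ ℓ : ℕ, Matrix (Fin (n (ℓ + 1))) (Fin (n ℓ)) ℝ)
    (b : ∀ ℓ : ℕ, Fin (n (ℓ + 1)) → ℝ) (x : Fin (n 0) → ℝ) :
    ∀ ℓ : ℕ, Fin (n (ℓ + 1)) → ℝ
  | 0 => W 0 *ᵥ x + b 0
  | ℓ + 1 => W (ℓ + 1) *ᵥ (fun i => max 0 (hid W b x ℓ i)) + b (ℓ + 1)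

/-- The matrices `C_ℓ` of the paper (0-indexed: `Cmat W z ℓ` is the paper's `C_{ℓ+1}`),
built from an activation pattern `z` via `C₁ = W₁`, `C_ℓ = W_ℓ diag(z_{ℓ-1}) C_{ℓ-1}`. -/
noncomputable def Cmat (W : ∀ ℓ : ℕ, Matrix (Fin (n (ℓ + 1))) (Fin (n ℓ)) ℝ)
    (z : ∀ ℓ : ℕ, Fin (n (ℓ + 1)) → ℝ) :
    ∀ ℓ : ℕ, Matrix (Fin (n (ℓ + 1))) (Fin (n 0)) ℝ
  | 0 => W 0
  | ℓ + 1 => W (ℓ + 1) * Matrix.diagonal (z ℓ) * Cmat W z ℓ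

/-- The vectors `d_ℓ` of the paper (0-indexed: `dvec W b z ℓ` is the paper's `d_{ℓ+1}`),
via `d₁ = b₁`, `d_ℓ = W_ℓ diag(z_{ℓ-1}) d_{ℓ-1} + b_ℓ`. -/
noncomputable def dvec (W : ∀ ℓ : ℕ, Matrix (Fin (n (ℓ + 1))) (Fin (n ℓ)) ℝ)
    (b : ∀ ℓ : ℕ, Fin (n (ℓ + 1)) → ℝ) (z : ∀ ℓ : ℕ, Fin (n (ℓ + 1)) → ℝ) :
    ∀ ℓ : ℕ, Fin (n (ℓ + 1)) → ℝ
  | 0 => b 0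
  | ℓ + 1 => W (ℓ + 1) *ᵥ (Matrix.diagonal (z ℓ) *ᵥ dvec W b z ℓ) + b (ℓ + 1)

/-- `x` induces activation pattern `z`, i.e. `𝟙(h_ℓ) = z_ℓ` for every hidden layer
`ℓ = 1, …, L - 1` of a network with `L = M + 1` layers. -/
def inducesPattern (M : ℕ) (W : ∀ ℓ : ℕ, Matrix (Fin (n (ℓ + 1))) (Fin (n ℓ)) ℝ)
    (b : ∀ ℓ : ℕ, Fin (n (ℓ + 1)) → ℝ) (x : Fin (n 0) → ℝ)
    (z : ∀ ℓ : ℕ, Fin (n (ℓ + 1)) → ℝ) : Prop :=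
  ∀ ℓ < M, ∀ i, (if 0 < hid W b x ℓ i then (1 : ℝ) else 0) = z ℓ i

/-- The convex polytope `K(ζ')` of Lemma 1: the sign conditions
`(C̄^{(L-1)} x + d̄^{(L-1)})_i ≤ 0` where `ζ'_i = 0` and `> 0` where `ζ'_i = 1`,
written blockwise over the hidden layers `ℓ = 1, …, L - 1` (with `L = M + 1`). -/
def Kpoly (M : ℕ) (W : ∀ ℓ : ℕ, Matrix (Fin (n (ℓ + 1))) (Fin (n ℓ)) ℝ)
    (b : ∀ ℓ : ℕ, Fin (n (ℓ + 1)) → ℝ)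
    (z : ∀ ℓ : ℕ, Fin (n (ℓ + 1)) → ℝ) : Set (Fin (n 0) → ℝ) :=
  {x | ∀ ℓ < M, ∀ i,
    (z ℓ i = 0 → (Cmat W z ℓ *ᵥ x + dvec W b z ℓ) i ≤ 0) ∧
    (z ℓ i = 1 → 0 < (Cmat W z ℓ *ᵥ x + dvec W b z ℓ) i)}

/-- Index set for the stacked vector `[h₁ᵀ, …, h_{L-1}ᵀ]ᵀ` (with `L = M + 1`):
a hidden layer index together with a neuron index in that layer. -/
abbrev PatIdx (M : ℕ) (n : ℕ → ℕ) := (ℓ : Fin M) × Fin (n (ℓ.1 + 1))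

/-- The `{0,1}`-valued activation pattern associated with a boolean vector on the
stacked index set. -/
def zOf {M : ℕ} (s : PatIdx M n → Bool) : ∀ ℓ : ℕ, Fin (n (ℓ + 1)) → ℝ :=
  fun ℓ i => if h : ℓ < M then (if s ⟨⟨ℓ, h⟩, i⟩ then 1 else 0) else 0

/-- The multivariate (possibly degenerate) Gaussian distribution `N(m, S)` on `ι → ℝ`:
the pushforward of a standard Gaussian under the affine map `x ↦ m + √S x`
(with junk value `0` if `S` is not positive semidefinite, a case never used below). -/
noncomputable def mvGaussian {ι : Type*} [Fintype ι] [DecidableEq ι]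
    (m : ι → ℝ) (S : Matrix ι ι ℝ) : Measure (ι → ℝ) :=
  letI := Classical.propDecidable S.PosSemidef
  if hS : S.PosSemidef then
    Measure.map (fun x => m + (hS.1.eigenvectorUnitary.1 * Matrix.diagonal (Real.sqrt ∘ hS.1.eigenvalues) *
      (star hS.1.eigenvectorUnitary : Matrix ι ι ℝ)) *ᵥ x) (Measure.pi fun _ : ι => gaussianReal 0 1)
  else 0

end ReluPaper

namespace MeasureTheory.Measure

variable {α β ι : Type*} [MeasurableSpace α] [MeasurableSpace β] [MeasurableSpace ι]
  [MeasurableSingletonClass ι] [Fintype ι]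

theorem map_eq_sum_map_restrict_fiber (ν : Measure α) {π : α → ι} (hπ : Measurable π)
    {f : α → β} (hf : Measurable f) (g : ι → α → β) (hfg : ∀ x, f x = g (π x) x) :
    ν.map f = ∑ i, (ν.restrict (π ⁻¹' {i})).map (g i) := by
  have hfibers : ⋃ i, π ⁻¹' {i} = Set.univ := by ext; simp
  calc ν.map f = (ν.restrict (⋃ i, π ⁻¹' {i})).map f := by rw [hfibers, restrict_univ]
    _ = (sum fun i => ν.restrict (π ⁻¹' {i})).map f := by
      rw [restrict_iUnion (pairwise_disjoint_fiber π) fun i => hπ (measurableSet_singleton i)]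
    _ = ∑ i, (ν.restrict (π ⁻¹' {i})).map f := by rw [map_sum hf.aemeasurable, sum_fintype]
    _ = ∑ i, (ν.restrict (π ⁻¹' {i})).map (g i) := by
      refine Finset.sum_congr rfl fun i _ => map_congr ?_
      filter_upwards [ae_restrict_mem (hπ (measurableSet_singleton i))] with x hx
      rw [hfg, Set.mem_preimage.mp hx]

end MeasureTheory.Measure

namespace ReluPaper

variable {n : ℕ → ℕ} (W : ∀ ℓ : ℕ, Matrix (Fin (n (ℓ + 1))) (Fin (n ℓ)) ℝ)
  (b : ∀ ℓ : ℕ, Fin (n (ℓ + 1)) → ℝ)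

theorem relu_eq_diagonal_mulVec {ι : Type*} [Fintype ι] [DecidableEq ι] (v : ι → ℝ) :
    (fun i => max 0 (v i)) = diagonal (fun i => if 0 < v i then 1 else 0) *ᵥ v := by
  ext i
  rw [mulVec_diagonal]
  split_ifs with h
  · simp [h.le]
  · simp [not_lt.mp h]

theorem hid_eq_of_inducesPattern {ℓ : ℕ} {x : Fin (n 0) → ℝ} {z : ∀ ℓ : ℕ, Fin (n (ℓ + 1)) → ℝ}
    (hz : inducesPattern ℓ W b x z) : hid W b x ℓ = Cmat W z ℓ *ᵥ x + dvec W b z ℓ := by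
  induction ℓ with
  | zero => rfl
  | succ ℓ ih =>
    have hlayer : (fun i => if 0 < hid W b x ℓ i then (1 : ℝ) else 0) = z ℓ :=
      funext (hz ℓ ℓ.lt_succ_self)
    have hprev : hid W b x ℓ = Cmat W z ℓ *ᵥ x + dvec W b z ℓ :=
      ih fun ℓ' hℓ' => hz ℓ' (hℓ'.trans ℓ.lt_succ_self)
    calc hid W b x (ℓ + 1)
        = W (ℓ + 1) *ᵥ (diagonal (z ℓ) *ᵥ hid W b x ℓ) + b (ℓ + 1) := by
          rw [← hlayer, ← relu_eq_diagonal_mulVec]; rfl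
      _ = Cmat W z (ℓ + 1) *ᵥ x + dvec W b z (ℓ + 1) := by
          simp only [Cmat, dvec, hprev, mulVec_add, mulVec_mulVec, Matrix.mul_assoc, add_assoc]

noncomputable def activationPattern (M : ℕ) (x : Fin (n 0) → ℝ) : PatIdx M n → Bool :=
  fun p => decide (0 < hid W b x p.1 p.2)

theorem measurable_hid (ℓ : ℕ) : Measurable fun x => hid W b x ℓ := by
  induction ℓ with
  | zero => simp only [hid]; fun_prop
  | succ ℓ ih => simp only [hid]; fun_prop

theorem measurable_activationPattern (M : ℕ) : Measurable (activationPattern W b M) := by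
  refine measurable_pi_lambda _ fun p => measurable_to_bool ?_
  simp only [activationPattern, Set.preimage, Set.mem_singleton_iff, decide_eq_true_eq]
  exact measurableSet_lt measurable_const ((measurable_hid W b p.1).eval)

theorem inducesPattern_zOf_iff {M : ℕ} {x : Fin (n 0) → ℝ} {s : PatIdx M n → Bool} :
    inducesPattern M W b x (zOf s) ↔ activationPattern W b M x = s := by
  have hlayer : ∀ ℓ (hℓ : ℓ < M) i, (if 0 < hid W b x ℓ i then (1 : ℝ) else 0) = zOf s ℓ i ↔
      decide (0 < hid W b x ℓ i) = s ⟨⟨ℓ, hℓ⟩, i⟩ := by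
    intro ℓ hℓ i
    rw [zOf, dif_pos hℓ]
    by_cases h : 0 < hid W b x ℓ i <;> cases s ⟨⟨ℓ, hℓ⟩, i⟩ <;> simp [h]
  exact ⟨fun h => funext fun ⟨⟨ℓ, hℓ⟩, i⟩ => (hlayer ℓ hℓ i).1 (h ℓ hℓ i),
    fun h ℓ hℓ i => (hlayer ℓ hℓ i).2 (congrFun h ⟨⟨ℓ, hℓ⟩, i⟩)⟩

theorem mem_Kpoly_iff_inducesPattern {M : ℕ} {x : Fin (n 0) → ℝ}
    {z : ∀ ℓ : ℕ, Fin (n (ℓ + 1)) → ℝ} (hz01 : ∀ ℓ < M, ∀ i, z ℓ i = 0 ∨ z ℓ i = 1) :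
    x ∈ Kpoly M W b z ↔ inducesPattern M W b x z := by
  constructor
  · intro hx
    suffices ∀ ℓ ≤ M, inducesPattern ℓ W b x z from this M le_rfl
    intro ℓ hℓ
    induction ℓ with
    | zero => exact fun _ h => absurd h (Nat.not_lt_zero _)
    | succ ℓ ih =>
      have hprev := ih (Nat.le_of_succ_le hℓ)
      intro ℓ' hℓ' i
      rcases Nat.lt_succ_iff_lt_or_eq.mp hℓ' with hlt | rfl
      · exact hprev ℓ' hlt i
      · obtain ⟨hnonpos, hpos⟩ := hx ℓ' hℓ i
        rw [← hid_eq_of_inducesPattern W b hprev] at hnonpos hpos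
        rcases hz01 ℓ' hℓ i with h0 | h1
        · rw [h0, if_neg (not_lt.mpr (hnonpos h0))]
        · rw [h1, if_pos (hpos h1)]
  · intro hx ℓ hℓ i
    rw [← hid_eq_of_inducesPattern W b fun ℓ' hℓ' => hx ℓ' (hℓ'.trans hℓ), ← hx ℓ hℓ i]
    by_cases h : 0 < hid W b x ℓ i
    · simp [h]
    · simp [h, not_lt.mp h]

theorem Kpoly_zOf_eq_preimage (M : ℕ) (s : PatIdx M n → Bool) :
    Kpoly M W b (zOf s) = activationPattern W b M ⁻¹' {s} := by
  ext x
  rw [mem_Kpoly_iff_inducesPattern, inducesPattern_zOf_iff]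
  · rfl
  intro ℓ hℓ i
  simp only [zOf, dif_pos hℓ]
  split_ifs <;> simp

theorem hid_eq_activationPattern (M : ℕ) (x : Fin (n 0) → ℝ) :
    hid W b x M = Cmat W (zOf (activationPattern W b M x)) M *ᵥ x +
      dvec W b (zOf (activationPattern W b M x)) M :=
  hid_eq_of_inducesPattern W b (inducesPattern_zOf_iff W b |>.mpr rfl)

theorem map_hid_eq_sum_map_restrict_Kpoly (M : ℕ) (ν : Measure (Fin (n 0) → ℝ)) :
    ν.map (fun x => hid W b x M) = ∑ s : PatIdx M n → Bool,
      (ν.restrict (Kpoly M W b (zOf s))).map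
        (fun x => Cmat W (zOf s) M *ᵥ x + dvec W b (zOf s) M) := by
  simp only [Kpoly_zOf_eq_preimage]
  exact ν.map_eq_sum_map_restrict_fiber (measurable_activationPattern W b M)
    (measurable_hid W b M) _ (hid_eq_activationPattern W b M)

theorem statement10_general
    (n : ℕ → ℕ) (M : ℕ)  -- the network has `L = M + 1` layers
    (W : ∀ ℓ : ℕ, Matrix (Fin (n (ℓ + 1))) (Fin (n ℓ)) ℝ)
    (b : ∀ ℓ : ℕ, Fin (n (ℓ + 1)) → ℝ)
    (Kc : ℕ) (α : Fin Kc → ℝ)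
    (μmix : Fin Kc → Fin (n 0) → ℝ) (Smix : Fin Kc → Matrix (Fin (n 0)) (Fin (n 0)) ℝ)
    {Ω : Type*} [MeasurableSpace Ω] (P : Measure Ω)
    (X : Ω → Fin (n 0) → ℝ) (hX : Measurable X)
    -- the input has Gaussian-mixture law `μ = ∑ k, α k • N(μ_k, Σ_k)`
    (hlaw : P.map X = ∑ k, ENNReal.ofReal (α k) • mvGaussian (μmix k) (Smix k))
    :
    P.map (fun ω => hid W b (X ω) M) =
      ∑ s : PatIdx M n → Bool, ∑ k, ENNReal.ofReal (α k) •
        Measure.map (fun x => Cmat W (zOf s) M *ᵥ x + dvec W b (zOf s) M)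
          ((mvGaussian (μmix k) (Smix k)).restrict (Kpoly M W b (zOf s))) := by
  have hf := measurable_hid W b M
  calc P.map (fun ω => hid W b (X ω) M) = (P.map X).map (fun x => hid W b x M) :=
        (Measure.map_map hf hX).symm
    _ = ∑ k, ENNReal.ofReal (α k) • (mvGaussian (μmix k) (Smix k)).map (fun x => hid W b x M) := by
        rw [hlaw, Measure.map_finset_sum' hf.aemeasurable]
        simp only [Measure.map_smul]
    _ = _ := by
        simp only [map_hid_eq_sum_map_restrict_Kpoly, Finset.smul_sum]
        exact Finset.sum_comm

/-- Proposition 2, measure form: for a Gaussian-mixture input, the law of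
the output `y = f(x)` is the mixture, over activation patterns `ζ'` and mixture
components `k`, of the pushforwards under the affine maps `g_{ζ'}(x) = C_L x + d_L` of
the Gaussians `N(μ_k, Σ_k)` restricted (truncated) to `K(ζ')`. -/
theorem statement10
    (n : ℕ → ℕ) (M : ℕ)  -- the network has `L = M + 1` layers
    (W : ∀ ℓ : ℕ, Matrix (Fin (n (ℓ + 1))) (Fin (n ℓ)) ℝ)
    (b : ∀ ℓ : ℕ, Fin (n (ℓ + 1)) → ℝ)
    (Kc : ℕ) (α : Fin Kc → ℝ) (hα : ∀ k, 0 < α k) (hαsum : ∑ k, α k = 1)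
    (μmix : Fin Kc → Fin (n 0) → ℝ) (Smix : Fin Kc → Matrix (Fin (n 0)) (Fin (n 0)) ℝ)
    (hSpd : ∀ k, (Smix k).PosDef)
    {Ω : Type*} [MeasurableSpace Ω] (P : Measure Ω) [IsProbabilityMeasure P]
    (X : Ω → Fin (n 0) → ℝ) (hX : Measurable X)
    -- the input has Gaussian-mixture law `μ = ∑ k, α k • N(μ_k, Σ_k)`
    (hlaw : P.map X = ∑ k, ENNReal.ofReal (α k) • mvGaussian (μmix k) (Smix k))
    :
    P.map (fun ω => hid W b (X ω) M) =
      ∑ s : PatIdx M n → Bool, ∑ k, ENNReal.ofReal (α k) •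
        Measure.map (fun x => Cmat W (zOf s) M *ᵥ x + dvec W b (zOf s) M)
          ((mvGaussian (μmix k) (Smix k)).restrict (Kpoly M W b (zOf s))) :=
  statement10_general n M W b Kc α μmix Smix P X hX hlaw

end ReluPaper
end

section
/- Let f be a ReLU network as defined and let the input x be a Gaussian-mixture random vector with law μ = Σ_{k=1}^K α_k N(μ_k, Σ_k). Fix a binary vector ζ' ∈ {0,1}^N, and set μ̃_{k,ζ'} = C̄^{(L)} μ_k + d̄^{(L)} and Σ̃_{k,ζ'} = C̄^{(L)} Σ_k (C̄^{(L)})ᵀ, assumed invertible for all k. Then for every φ ∈ ℝ^{n_L}, the joint probability that the output lies below φ and the activation pattern equals ζ' satisfies: P( f(x) < φ componentwise and ζ(x) = ζ' ) = Σ_{k=1}^K α_k · N(μ̃_{k,ζ'}, Σ̃_{k,ζ'})( { (u, w) ∈ ℝ^N × ℝ^{n_L} : u ∈ O(ζ') and w < φ componentwise } ). -/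
/-
On the event `ζ(x) = ζ'` every ReLU acts as the fixed diagonal projection `diag z_ℓ`, so all
layers are affine in the input, `h_ℓ = C_ℓ x + d_ℓ`; conversely, the pattern can be read off layer
by layer from the signs of `C_ℓ x + d_ℓ`. Hence the event is the preimage of `O(ζ') × {w < φ}`
under the affine map `x ↦ C̄ x + d̄`, and its probability splits over the mixture components. The
image of `N(μ_k, Σ_k)` under that map is `N(C̄ μ_k + d̄, C̄ Σ_k C̄ᵀ)`, as one sees on
characteristic functions.
-/

open Matrix MeasureTheory ProbabilityTheory

namespace ReluPaper

variable {n : ℕ → ℕ}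

open scoped RealInnerProductSpace MatrixOrder

section Gaussian

variable {ι κ : Type*} [Fintype ι] [DecidableEq ι] [Fintype κ] [DecidableEq κ]

lemma spectral_sqrt_eq_cfcSqrt {S : Matrix ι ι ℝ} (hS : S.PosSemidef) :
    hS.1.eigenvectorUnitary.1 * diagonal (Real.sqrt ∘ hS.1.eigenvalues) *
      (star hS.1.eigenvectorUnitary : Matrix ι ι ℝ) = CFC.sqrt S := by
  rw [CFC.sqrt_eq_cfc, cfc_nnreal_eq_real _ S, hS.1.cfc_eq, IsHermitian.cfc,
    Unitary.conjStarAlgAut_apply]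
  congr 3
  ext i
  simp [max_eq_left (hS.eigenvalues_nonneg i)]

lemma mvGaussian_eq_map_ofLp {S : Matrix ι ι ℝ} (hS : S.PosSemidef) (m : ι → ℝ) :
    mvGaussian m S = (multivariateGaussian (WithLp.toLp 2 m) S).map WithLp.ofLp := by
  rw [mvGaussian, dif_pos hS, spectral_sqrt_eq_cfcSqrt hS, multivariateGaussian,
    ← map_pi_eq_stdGaussian, Measure.map_map (by fun_prop) (by fun_prop),
    Measure.map_map (by fun_prop) (by fun_prop)]
  rfl

open WithLp Complex in
lemma multivariateGaussian_map_affine {S : Matrix ι ι ℝ} (hS : S.PosSemidef)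
    (μ : EuclideanSpace ℝ ι) (C : Matrix κ ι ℝ) (d : κ → ℝ) :
    (multivariateGaussian μ S).map (fun x => toLp 2 (C *ᵥ ofLp x + d)) =
      multivariateGaussian (toLp 2 (C *ᵥ ofLp μ + d)) (C * S * Cᵀ) := by
  have hCSC : (C * S * Cᵀ).PosSemidef := hS.mul_mul_conjTranspose_same C
  refine Measure.ext_of_charFun (funext fun t => ?_)
  have hinner : ∀ x : EuclideanSpace ℝ ι, ⟪toLp 2 (C *ᵥ ofLp x + d), t⟫ =
      ⟪x, toLp 2 (Cᵀ *ᵥ ofLp t)⟫ + ofLp t ⬝ᵥ d := by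
    intro x
    simp only [EuclideanSpace.inner_eq_star_dotProduct, star_trivial, dotProduct_add]
    rw [dotProduct_mulVec, mulVec_transpose]
  rw [charFun_multivariateGaussian hCSC, charFun_apply, integral_map (by fun_prop) (by fun_prop)]
  simp_rw [hinner, ofReal_add, add_mul, exp_add]
  rw [integral_mul_const, ← charFun_apply, charFun_multivariateGaussian hS, ← exp_add]
  congr 1
  simp only [EuclideanSpace.inner_eq_star_dotProduct, star_trivial]
  have hmean : μ.ofLp ⬝ᵥ Cᵀ *ᵥ t.ofLp + t.ofLp ⬝ᵥ d = (C *ᵥ μ.ofLp + d) ⬝ᵥ t.ofLp := by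
    rw [dotProduct_comm μ.ofLp, mulVec_transpose, ← dotProduct_mulVec, add_dotProduct,
      dotProduct_comm (C *ᵥ _), dotProduct_comm d]
  have hcov : Cᵀ *ᵥ t.ofLp ⬝ᵥ S *ᵥ Cᵀ *ᵥ t.ofLp = t.ofLp ⬝ᵥ (C * S * Cᵀ) *ᵥ t.ofLp := by
    rw [← mulVec_mulVec, ← mulVec_mulVec, dotProduct_mulVec t.ofLp, ← mulVec_transpose]
  rw [← hmean, ← hcov]
  push_cast
  ring

lemma mvGaussian_map_affine {S : Matrix ι ι ℝ} (hS : S.PosSemidef) (m : ι → ℝ)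
    (C : Matrix κ ι ℝ) (d : κ → ℝ) :
    (mvGaussian m S).map (fun x => C *ᵥ x + d) = mvGaussian (C *ᵥ m + d) (C * S * Cᵀ) := by
  have hCSC : (C * S * Cᵀ).PosSemidef := hS.mul_mul_conjTranspose_same C
  rw [mvGaussian_eq_map_ofLp hS, mvGaussian_eq_map_ofLp hCSC,
    ← multivariateGaussian_map_affine hS, Measure.map_map (by fun_prop) (by fun_prop),
    Measure.map_map (by fun_prop) (by fun_prop)]
  rfl

end Gaussian

section Network

variable (W : ∀ ℓ : ℕ, Matrix (Fin (n (ℓ + 1))) (Fin (n ℓ)) ℝ) (b : ∀ ℓ : ℕ, Fin (n (ℓ + 1)) → ℝ)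
  (z : ∀ ℓ : ℕ, Fin (n (ℓ + 1)) → ℝ)

lemma hid_eq_of_pattern {x : Fin (n 0) → ℝ} {ℓ : ℕ}
    (h : ∀ ℓ' < ℓ, ∀ i, (if 0 < hid W b x ℓ' i then (1 : ℝ) else 0) = z ℓ' i) :
    hid W b x ℓ = Cmat W z ℓ *ᵥ x + dvec W b z ℓ := by
  induction ℓ with
  | zero => rfl
  | succ ℓ ih =>
    have hrelu : (fun i => max 0 (hid W b x ℓ i)) = diagonal (z ℓ) *ᵥ hid W b x ℓ := by
      funext i
      rw [mulVec_diagonal, ← h ℓ ℓ.lt_succ_self i]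
      split_ifs with hpos
      · rw [one_mul, max_eq_right hpos.le]
      · rw [zero_mul, max_eq_left (not_lt.mp hpos)]
    change W (ℓ + 1) *ᵥ _ + b (ℓ + 1) = (W (ℓ + 1) * diagonal (z ℓ) * Cmat W z ℓ) *ᵥ x +
      (W (ℓ + 1) *ᵥ (diagonal (z ℓ) *ᵥ dvec W b z ℓ) + b (ℓ + 1))
    rw [hrelu, ih fun ℓ' hℓ' => h ℓ' (hℓ'.trans ℓ.lt_succ_self)]
    simp only [mulVec_add, mulVec_mulVec, Matrix.mul_assoc, add_assoc]

lemma inducesPattern_iff {M : ℕ} {x : Fin (n 0) → ℝ} :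
    inducesPattern M W b x z ↔ ∀ ℓ < M, ∀ i,
      (if 0 < (Cmat W z ℓ *ᵥ x + dvec W b z ℓ) i then (1 : ℝ) else 0) = z ℓ i := by
  constructor
  · intro h ℓ hℓ i
    rw [← hid_eq_of_pattern W b z fun ℓ' hℓ' => h ℓ' (hℓ'.trans hℓ)]
    exact h ℓ hℓ i
  · intro h ℓ
    induction ℓ using Nat.strong_induction_on with
    | _ ℓ ih =>
      intro hℓ i
      rw [hid_eq_of_pattern W b z fun ℓ' hℓ' => ih ℓ' hℓ' (hℓ'.trans hℓ)]
      exact h ℓ hℓ i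

/-- `O(ζ') × {w < φ}` in the coordinates of the stacked vector `[u; w]`. -/
def patternOutputSet (M : ℕ) (φ : Fin (n (M + 1)) → ℝ) :
    Set (PatIdx M n ⊕ Fin (n (M + 1)) → ℝ) :=
  {v | (∀ p : PatIdx M n, (if 0 < v (Sum.inl p) then (1 : ℝ) else 0) = z (p.1 : ℕ) p.2) ∧
    (∀ j, v (Sum.inr j) < φ j)}

lemma measurableSet_patternOutputSet (M : ℕ) (φ : Fin (n (M + 1)) → ℝ) :
    MeasurableSet (patternOutputSet z M φ) := by
  simp only [patternOutputSet, Set.ofPred_and, Set.ofPred_forall]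
  refine .inter (.iInter fun p => measurableSet_eq_fun ?_ measurable_const)
    (.iInter fun j => measurableSet_lt (measurable_pi_apply _) measurable_const)
  exact Measurable.ite (measurableSet_lt measurable_const (measurable_pi_apply _))
    measurable_const measurable_const

lemma setOf_hid_lt_and_inducesPattern_eq_preimage (M : ℕ) (φ : Fin (n (M + 1)) → ℝ) :
    {x | (∀ j, hid W b x M j < φ j) ∧ inducesPattern M W b x z} =
      (fun x => Sum.elim (fun p : PatIdx M n => (Cmat W z p.1 *ᵥ x + dvec W b z p.1) p.2)
        (Cmat W z M *ᵥ x + dvec W b z M)) ⁻¹' patternOutputSet z M φ := by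
  ext x
  have hpat : (∀ p : PatIdx M n,
      (if 0 < (Cmat W z p.1 *ᵥ x + dvec W b z p.1) p.2 then (1 : ℝ) else 0) = z p.1 p.2) ↔
      inducesPattern M W b x z := by
    rw [inducesPattern_iff]
    exact ⟨fun h ℓ hℓ i => h ⟨⟨ℓ, hℓ⟩, i⟩, fun h p => h p.1 p.1.isLt p.2⟩
  change (∀ j, hid W b x M j < φ j) ∧ inducesPattern M W b x z ↔ (∀ p : PatIdx M n,
      (if 0 < (Cmat W z p.1 *ᵥ x + dvec W b z p.1) p.2 then (1 : ℝ) else 0) = z p.1 p.2) ∧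
    ∀ j, (Cmat W z M *ᵥ x + dvec W b z M) j < φ j
  rw [hpat]
  exact and_comm.trans (and_congr_right fun h => by rw [hid_eq_of_pattern W b z (ℓ := M) h])

end Network

theorem statement11_general
    (n : ℕ → ℕ) (M : ℕ)  -- the network has `L = M + 1` layers
    (W : ∀ ℓ : ℕ, Matrix (Fin (n (ℓ + 1))) (Fin (n ℓ)) ℝ)
    (b : ∀ ℓ : ℕ, Fin (n (ℓ + 1)) → ℝ)
    (z : ∀ ℓ : ℕ, Fin (n (ℓ + 1)) → ℝ)
    (Kc : ℕ) (α : Fin Kc → ℝ)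
    (μmix : Fin Kc → Fin (n 0) → ℝ) (Smix : Fin Kc → Matrix (Fin (n 0)) (Fin (n 0)) ℝ)
    (hSpd : ∀ k, (Smix k).PosDef)
    {Ω : Type*} [MeasurableSpace Ω] (P : Measure Ω)
    (X : Ω → Fin (n 0) → ℝ) (hX : Measurable X)
    -- the input has Gaussian-mixture law `μ = ∑ k, α k • N(μ_k, Σ_k)`
    (hlaw : P.map X = ∑ k, ENNReal.ofReal (α k) • mvGaussian (μmix k) (Smix k))
    -- the stacked matrix `C̄^{(L)}` and stacked vector `d̄^{(L)}`
    (Cbar : Matrix (PatIdx M n ⊕ Fin (n (M + 1))) (Fin (n 0)) ℝ)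
    (hCbar₁ : ∀ (p : PatIdx M n) (j : Fin (n 0)),
      Cbar (Sum.inl p) j = Cmat W z (p.1 : ℕ) p.2 j)
    (hCbar₂ : ∀ (i : Fin (n (M + 1))) (j : Fin (n 0)), Cbar (Sum.inr i) j = Cmat W z M i j)
    (dbar : PatIdx M n ⊕ Fin (n (M + 1)) → ℝ)
    (hdbar₁ : ∀ p : PatIdx M n, dbar (Sum.inl p) = dvec W b z (p.1 : ℕ) p.2)
    (hdbar₂ : ∀ i : Fin (n (M + 1)), dbar (Sum.inr i) = dvec W b z M i)
    (φ : Fin (n (M + 1)) → ℝ) :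
    P {ω | (∀ j, hid W b (X ω) M j < φ j) ∧ inducesPattern M W b (X ω) z} =
      ∑ k, ENNReal.ofReal (α k) *
        mvGaussian (Cbar *ᵥ μmix k + dbar) (Cbar * Smix k * Cbarᵀ)
          {v : PatIdx M n ⊕ Fin (n (M + 1)) → ℝ |
            (∀ p : PatIdx M n, (if 0 < v (Sum.inl p) then (1 : ℝ) else 0) = z (p.1 : ℕ) p.2) ∧
            (∀ j, v (Sum.inr j) < φ j)} := by
  set g : (Fin (n 0) → ℝ) → PatIdx M n ⊕ Fin (n (M + 1)) → ℝ := fun x => Cbar *ᵥ x + dbar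
  have hg : Measurable g := by fun_prop
  have hB := measurableSet_patternOutputSet z M φ
  have hevent : {x | (∀ j, hid W b x M j < φ j) ∧ inducesPattern M W b x z} =
      g ⁻¹' patternOutputSet z M φ := by
    rw [setOf_hid_lt_and_inducesPattern_eq_preimage]
    congr 1
    funext x
    ext (p | i) <;> simp [g, mulVec, dotProduct, hCbar₁, hCbar₂, hdbar₁, hdbar₂]
  calc P {ω | (∀ j, hid W b (X ω) M j < φ j) ∧ inducesPattern M W b (X ω) z}
      = P.map X (g ⁻¹' patternOutputSet z M φ) := by
        rw [Measure.map_apply hX (hg hB), ← hevent]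
        rfl
    _ = ∑ k, ENNReal.ofReal (α k) *
          (mvGaussian (μmix k) (Smix k)).map g (patternOutputSet z M φ) := by
        simp only [hlaw, Measure.finsetSum_apply, Measure.smul_apply, smul_eq_mul,
          Measure.map_apply hg hB]
    _ = _ := by
        simp only [g, mvGaussian_map_affine (hSpd _).posSemidef]
        rfl

/-- joint probability of `{f(x) < φ}` and `{ζ(x) = ζ'}` as a mixture of
Gaussian measures of `{(u, w) : u ∈ O(ζ'), w < φ}`, using the stacked `C̄^{(L)}, d̄^{(L)}`
(the extra block row, indexed by `Sum.inr`, is `C_L, d_L`). -/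
theorem statement11
    (n : ℕ → ℕ) (M : ℕ)  -- the network has `L = M + 1` layers
    (W : ∀ ℓ : ℕ, Matrix (Fin (n (ℓ + 1))) (Fin (n ℓ)) ℝ)
    (b : ∀ ℓ : ℕ, Fin (n (ℓ + 1)) → ℝ)
    (z : ∀ ℓ : ℕ, Fin (n (ℓ + 1)) → ℝ)
    (hz : ∀ ℓ < M, ∀ i, z ℓ i = 0 ∨ z ℓ i = 1)  -- `ζ' ∈ {0,1}^N`
    (Kc : ℕ) (α : Fin Kc → ℝ) (hα : ∀ k, 0 < α k) (hαsum : ∑ k, α k = 1)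
    (μmix : Fin Kc → Fin (n 0) → ℝ) (Smix : Fin Kc → Matrix (Fin (n 0)) (Fin (n 0)) ℝ)
    (hSpd : ∀ k, (Smix k).PosDef)
    {Ω : Type*} [MeasurableSpace Ω] (P : Measure Ω) [IsProbabilityMeasure P]
    (X : Ω → Fin (n 0) → ℝ) (hX : Measurable X)
    -- the input has Gaussian-mixture law `μ = ∑ k, α k • N(μ_k, Σ_k)`
    (hlaw : P.map X = ∑ k, ENNReal.ofReal (α k) • mvGaussian (μmix k) (Smix k))
    -- the stacked matrix `C̄^{(L)}` and stacked vector `d̄^{(L)}`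
    (Cbar : Matrix (PatIdx M n ⊕ Fin (n (M + 1))) (Fin (n 0)) ℝ)
    (hCbar₁ : ∀ (p : PatIdx M n) (j : Fin (n 0)),
      Cbar (Sum.inl p) j = Cmat W z (p.1 : ℕ) p.2 j)
    (hCbar₂ : ∀ (i : Fin (n (M + 1))) (j : Fin (n 0)), Cbar (Sum.inr i) j = Cmat W z M i j)
    (dbar : PatIdx M n ⊕ Fin (n (M + 1)) → ℝ)
    (hdbar₁ : ∀ p : PatIdx M n, dbar (Sum.inl p) = dvec W b z (p.1 : ℕ) p.2)
    (hdbar₂ : ∀ i : Fin (n (M + 1)), dbar (Sum.inr i) = dvec W b z M i)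
    -- `Σ̃_{k,ζ'} = C̄^{(L)} Σ_k C̄^{(L)ᵀ}` is invertible for all `k`
    (hinv : ∀ k, IsUnit (Cbar * Smix k * Cbarᵀ))
    (φ : Fin (n (M + 1)) → ℝ) :
    P {ω | (∀ j, hid W b (X ω) M j < φ j) ∧ inducesPattern M W b (X ω) z} =
      ∑ k, ENNReal.ofReal (α k) *
        mvGaussian (Cbar *ᵥ μmix k + dbar) (Cbar * Smix k * Cbarᵀ)
          {v : PatIdx M n ⊕ Fin (n (M + 1)) → ℝ |
            (∀ p : PatIdx M n, (if 0 < v (Sum.inl p) then (1 : ℝ) else 0) = z (p.1 : ℕ) p.2) ∧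
            (∀ j, v (Sum.inr j) < φ j)} :=
  statement11_general n M W b z Kc α μmix Smix hSpd P X hX hlaw Cbar hCbar₁ hCbar₂ dbar hdbar₁
    hdbar₂ φ

end ReluPaper
end
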